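/- Let π_i be a target policy, μ_i a behavior policy, and β^{(i)} a trace function satisfying Condition 1, with C_i := Σ_{t=0}^∞ γ^t B_t^{(i)} and M_i Q := Q + C_i (T_{π_i} Q − Q). Then for every Q ∈ ℝ^n, M_i Q − Q* ≤ Z_i (Q − Q*) entrywise, where Z_i := I − C_i (I − γ P_{π_i}) and Q* is the fixed point of the Bellman optimality operator T. -/

import Mathlib

open scoped BigOperators

/-- `P` is a transition function: `P s a` is a probability distribution on next states. -/
def IsTransition {S A : Type} [Fintype S] (P : S → A → S → ℝ) : Prop :=
  (∀ s a s', 0 ≤ P s a s') ∧ ∀ s a, ∑ s', P s a s' = 1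

/-- `π` is a policy: `π s` is a probability distribution on actions. -/
def IsPolicy {S A : Type} [Fintype A] (π : S → A → ℝ) : Prop :=
  (∀ s a, 0 ≤ π s a) ∧ ∀ s, ∑ a, π s a = 1

/-- A behavior policy assigns positive probability to every action in every state. -/
def IsBehavior {S A : Type} [Fintype A] (μ : S → A → ℝ) : Prop :=
  IsPolicy μ ∧ ∀ s a, 0 < μ s a

/-- The policy matrix `P_π((s,a),(s',a')) = P(s'|s,a)·π(a'|s')`. -/
def polMat {S A : Type} (P : S → A → S → ℝ) (π : S → A → ℝ) :
    Matrix (S × A) (S × A) ℝ :=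
  fun x y => P x.1 x.2 y.1 * π y.1 y.2

/-- The importance-sampling ratio `ρ(s,a) = π(a|s) / μ(a|s)`. -/
noncomputable def isRatio {S A : Type} (π μ : S → A → ℝ) (x : S × A) : ℝ :=
  π x.1 x.2 / μ x.1 x.2

/-- Probability under behavior policy `μ` of a length-`t` trajectory
`F = ((S_0,A_0),…,(S_t,A_t))`:  `∏_{k=1}^t P(S_k|S_{k-1},A_{k-1})·μ(A_k|S_k)`. -/
def prMu {S A : Type} (P : S → A → S → ℝ) (μ : S → A → ℝ) {t : ℕ}
    (F : Fin (t + 1) → S × A) : ℝ :=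
  ∏ k : Fin t,
    (P (F k.castSucc).1 (F k.castSucc).2 (F k.succ).1 * μ (F k.succ).1 (F k.succ).2)

/-- A trace function: a nonnegative weight for every finite trajectory,
equal to `1` on length-0 trajectories. -/
def IsTrace {S A : Type} (β : (t : ℕ) → (Fin (t + 1) → S × A) → ℝ) : Prop :=
  (∀ t F, 0 ≤ β t F) ∧ ∀ F : Fin 1 → S × A, β 0 F = 1

/-- Condition 1: `β(F_t) ≤ β(F_{t-1})·ρ_t` for every `t ≥ 1` and every trajectory `F_t`,
where `F_{t-1}` is the length-`(t-1)` prefix. -/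
def Cond1 {S A : Type} (π μ : S → A → ℝ)
    (β : (t : ℕ) → (Fin (t + 1) → S × A) → ℝ) : Prop :=
  ∀ (t : ℕ) (F : Fin (t + 2) → S × A),
    β (t + 1) F ≤ β t (fun k => F k.castSucc) * isRatio π μ (F (Fin.last (t + 1)))

/-- The matrix `B_t((s,a),(s',a')) = Σ_{F_t from (s,a) ending at (s',a')} Pr_μ(F_t)·β(F_t)`. -/
noncomputable def Bmat {S A : Type} [Fintype S] [Fintype A] [DecidableEq S] [DecidableEq A]
    (P : S → A → S → ℝ) (μ : S → A → ℝ)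
    (β : (t : ℕ) → (Fin (t + 1) → S × A) → ℝ) (t : ℕ) :
    Matrix (S × A) (S × A) ℝ :=
  fun x y => ∑ F : Fin (t + 1) → S × A,
    if F 0 = x ∧ F (Fin.last t) = y then prMu P μ F * β t F else 0

/-- The Bellman operator `T_π Q = R + γ P_π Q`. -/
noncomputable def Tpi {S A : Type} [Fintype S] [Fintype A]
    (P : S → A → S → ℝ) (R : S × A → ℝ) (π : S → A → ℝ) (γ : ℝ)
    (Q : S × A → ℝ) : S × A → ℝ :=
  fun x => R x + γ * (polMat P π).mulVec Q x

/-- The Bellman optimality operator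
`(T Q)(s,a) = R(s,a) + γ Σ_{s'} P(s'|s,a) max_{a'} Q(s',a')`. -/
noncomputable def Topt {S A : Type} [Fintype S] [Fintype A] [Nonempty A]
    (P : S → A → S → ℝ) (R : S × A → ℝ) (γ : ℝ) (Q : S × A → ℝ) : S × A → ℝ :=
  fun x => R x + γ * ∑ s', P x.1 x.2 s' * ⨆ a', Q (s', a')

/-- The operator `M Q = Q + Σ_{t=0}^∞ γ^t B_t (T_π Q − Q)`. -/
noncomputable def Mop {S A : Type} [Fintype S] [Fintype A] [DecidableEq S] [DecidableEq A]
    (P : S → A → S → ℝ) (R : S × A → ℝ) (π μ : S → A → ℝ)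
    (β : (t : ℕ) → (Fin (t + 1) → S × A) → ℝ) (γ : ℝ)
    (Q : S × A → ℝ) : S × A → ℝ :=
  fun x => Q x + ∑' t : ℕ,
    γ ^ t * (Bmat P μ β t).mulVec (fun y => Tpi P R π γ Q y - Q y) x

/-- The matrix `Z = Σ_{t=1}^∞ γ^t (B_{t−1} P_π − B_t)`. -/
noncomputable def Zmat {S A : Type} [Fintype S] [Fintype A] [DecidableEq S] [DecidableEq A]
    (P : S → A → S → ℝ) (π μ : S → A → ℝ)
    (β : (t : ℕ) → (Fin (t + 1) → S × A) → ℝ) (γ : ℝ) :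
    Matrix (S × A) (S × A) ℝ :=
  fun x y => ∑' t : ℕ,
    γ ^ (t + 1) * ((Bmat P μ β t * polMat P π - Bmat P μ β (t + 1)) x y)

/-- The matrix `C = Σ_{t=0}^∞ γ^t B_t`. -/
noncomputable def Cmat {S A : Type} [Fintype S] [Fintype A] [DecidableEq S] [DecidableEq A]
    (P : S → A → S → ℝ) (μ : S → A → ℝ)
    (β : (t : ℕ) → (Fin (t + 1) → S × A) → ℝ) (γ : ℝ) :
    Matrix (S × A) (S × A) ℝ :=
  fun x y => ∑' t : ℕ, γ ^ t * Bmat P μ β t x y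

/-- The operator `M Q = Q + C (T_π Q − Q)` with `C = Σ_t γ^t B_t`. -/
noncomputable def MopC {S A : Type} [Fintype S] [Fintype A] [DecidableEq S] [DecidableEq A]
    (P : S → A → S → ℝ) (R : S × A → ℝ) (π μ : S → A → ℝ)
    (β : (t : ℕ) → (Fin (t + 1) → S × A) → ℝ) (γ : ℝ)
    (Q : S × A → ℝ) : S × A → ℝ :=
  fun x => Q x + (Cmat P μ β γ).mulVec (fun y => Tpi P R π γ Q y - Q y) x

/-! `T_π Q* ≤ T Q* = Q*` because averaging over `π` never exceeds the maximum over actions, and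
`M Q − Q* = Z (Q − Q*) + C (T_π Q* − Q*)` is an identity valid for any matrix `C`; since `C` has
nonnegative entries, the second term is nonpositive. -/

open Matrix

lemma Matrix.mulVec_nonpos_of_nonneg_of_nonpos {m n R : Type*} [Fintype n] [Semiring R]
    [PartialOrder R] [IsOrderedRing R] {M : Matrix m n R} {v : n → R}
    (hM : ∀ i j, 0 ≤ M i j) (hv : ∀ j, v j ≤ 0) (i : m) : (M *ᵥ v) i ≤ 0 :=
  Finset.sum_nonpos fun j _ => mul_nonpos_of_nonneg_of_nonpos (hM i j) (hv j)

section TraceWeights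

variable {S A : Type} {P : S → A → S → ℝ} {μ : S → A → ℝ}
  (hP : ∀ s a s', 0 ≤ P s a s') (hμ : ∀ s a, 0 ≤ μ s a)
include hP hμ

lemma prMu_nonneg {t : ℕ} (F : Fin (t + 1) → S × A) : 0 ≤ prMu P μ F :=
  Finset.prod_nonneg fun _ _ => mul_nonneg (hP _ _ _) (hμ _ _)

variable [Fintype S] [Fintype A] [DecidableEq S] [DecidableEq A]
  {β : (t : ℕ) → (Fin (t + 1) → S × A) → ℝ} (hβ : ∀ t F, 0 ≤ β t F)
include hβ

lemma Bmat_nonneg (t : ℕ) (x y : S × A) : 0 ≤ Bmat P μ β t x y :=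
  Finset.sum_nonneg fun F _ => by
    split_ifs
    · exact mul_nonneg (prMu_nonneg hP hμ F) (hβ t F)
    · exact le_rfl

-- `tsum_nonneg` needs no summability: a divergent series sums to `0` here.
lemma Cmat_nonneg {γ : ℝ} (hγ : 0 ≤ γ) (x y : S × A) : 0 ≤ Cmat P μ β γ x y :=
  tsum_nonneg fun t => mul_nonneg (pow_nonneg hγ t) (Bmat_nonneg hP hμ hβ t x y)

end TraceWeights

lemma sum_policy_mul_le_iSup {S A : Type} [Fintype A] [Nonempty A] {π : S → A → ℝ}
    (hπ : IsPolicy π) (s : S) (f : A → ℝ) : ∑ a, π s a * f a ≤ ⨆ a, f a :=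
  calc ∑ a, π s a * f a ≤ ∑ a, π s a * ⨆ a', f a' :=
        Finset.sum_le_sum fun a _ =>
          mul_le_mul_of_nonneg_left (le_ciSup (Set.finite_range f).bddAbove a) (hπ.1 s a)
    _ = ⨆ a, f a := by rw [← Finset.sum_mul, hπ.2, one_mul]

lemma polMat_mulVec {S A : Type} [Fintype S] [Fintype A] (P : S → A → S → ℝ)
    (π : S → A → ℝ) (Q : S × A → ℝ) (x : S × A) :
    (polMat P π *ᵥ Q) x = ∑ s', P x.1 x.2 s' * ∑ a', π s' a' * Q (s', a') := by
  simp only [mulVec, dotProduct, Fintype.sum_prod_type, polMat, Finset.mul_sum, mul_assoc]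

lemma Tpi_le_Topt {S A : Type} [Fintype S] [Fintype A] [Nonempty A]
    {P : S → A → S → ℝ} {π : S → A → ℝ} {γ : ℝ} (hP : ∀ s a s', 0 ≤ P s a s')
    (hπ : IsPolicy π) (hγ : 0 ≤ γ) (R : S × A → ℝ) (Q : S × A → ℝ) (x : S × A) :
    Tpi P R π γ Q x ≤ Topt P R γ Q x := by
  rw [Tpi, Topt, polMat_mulVec]
  gcongr with s' _
  · exact hP _ _ _
  · exact sum_policy_mul_le_iSup hπ s' _

section Algebra

variable {S A : Type} [Fintype S] [Fintype A] [DecidableEq S] [DecidableEq A]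
  (P : S → A → S → ℝ) (R : S × A → ℝ) (π μ : S → A → ℝ)
  (β : (t : ℕ) → (Fin (t + 1) → S × A) → ℝ) (γ : ℝ)

lemma Tpi_sub_self_eq (Q V : S × A → ℝ) :
    Tpi P R π γ Q - Q = (Tpi P R π γ V - V) - (1 - γ • polMat P π) *ᵥ (Q - V) := by
  ext y
  simp only [Tpi, Pi.sub_apply, sub_mulVec, one_mulVec, smul_mulVec, mulVec_sub,
    Pi.smul_apply, smul_eq_mul]
  ring

lemma MopC_sub_eq (Q V : S × A → ℝ) :
    MopC P R π μ β γ Q - V =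
      (1 - Cmat P μ β γ * (1 - γ • polMat P π)) *ᵥ (Q - V)
        + Cmat P μ β γ *ᵥ (Tpi P R π γ V - V) := by
  change Q + Cmat P μ β γ *ᵥ (Tpi P R π γ Q - Q) - V = _
  rw [Tpi_sub_self_eq P R π γ Q V]
  simp only [mulVec_sub, sub_mulVec, one_mulVec, ← mulVec_mulVec]
  abel

end Algebra

theorem stmt5_general {S A : Type} [Fintype S] [Fintype A] [DecidableEq S] [DecidableEq A]
    [Nonempty A]
    (P : S → A → S → ℝ) (R : S × A → ℝ) (π μ : S → A → ℝ) (γ : ℝ)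
    (β : (t : ℕ) → (Fin (t + 1) → S × A) → ℝ)
    (hP : IsTransition P) (hπ : IsPolicy π) (hμ : IsBehavior μ) (hβ : IsTrace β)
    (hγ0 : 0 ≤ γ)
    (Qstar : S × A → ℝ) (hQstar : Topt P R γ Qstar = Qstar) :
    ∀ (Q : S × A → ℝ) (x : S × A),
      MopC P R π μ β γ Q x - Qstar x ≤
        ((1 - Cmat P μ β γ * (1 - γ • polMat P π)).mulVec (Q - Qstar)) x := by
  intro Q x
  have hTpi : ∀ y, (Tpi P R π γ Qstar - Qstar) y ≤ 0 := fun y => by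
    have h := Tpi_le_Topt hP.1 hπ hγ0 R Qstar y
    rw [hQstar] at h
    exact sub_nonpos.mpr h
  have hC := Cmat_nonneg hP.1 hμ.1.1 hβ.1 hγ0
  rw [← Pi.sub_apply (MopC P R π μ β γ Q), MopC_sub_eq, Pi.add_apply]
  linarith [mulVec_nonpos_of_nonneg_of_nonpos hC hTpi x]

/-- upper bound in the control analysis:
`M_i Q − Q* ≤ Z_i (Q − Q*)` entrywise, where `Z_i = I − C_i(I − γ P_{π_i})`. -/
theorem stmt5 {S A : Type} [Fintype S] [Fintype A] [DecidableEq S] [DecidableEq A]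
    [Nonempty S] [Nonempty A]
    (P : S → A → S → ℝ) (R : S × A → ℝ) (π μ : S → A → ℝ) (γ : ℝ)
    (β : (t : ℕ) → (Fin (t + 1) → S × A) → ℝ)
    (hP : IsTransition P) (hπ : IsPolicy π) (hμ : IsBehavior μ) (hβ : IsTrace β)
    (hγ0 : 0 ≤ γ) (hγ1 : γ < 1)
    (hc : Cond1 π μ β)
    (Qstar : S × A → ℝ) (hQstar : Topt P R γ Qstar = Qstar) :
    ∀ (Q : S × A → ℝ) (x : S × A),
      MopC P R π μ β γ Q x - Qstar x ≤
        ((1 - Cmat P μ β γ * (1 - γ • polMat P π)).mulVec (Q - Qstar)) x :=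
  stmt5_general P R π μ γ β hP hπ hμ hβ hγ0 Qstar hQstar
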